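/- arXiv:math/0202016 — 3 statements merged into one kernel-verified Lean document; each statement's English description precedes it below -/
import Mathlib

section
/- Let V be a real vector space of dimension 3n with a polysymplectic structure given by two 2-forms ω₁, ω₂, and let g be an inner product on V. If v₁,...,vₙ,w¹₁,...,w¹ₙ,w²₁,...,w²ₙ and ṽ₁,...,ṽₙ,w̃¹₁,...,w̃¹ₙ,w̃²₁,...,w̃²ₙ are two orthonormal standard polysymplectic bases (i.e. orthonormal bases such that ωⱼ = Σᵢ vᵢ* ∧ (wʲᵢ)* in both cases), then Σᵢ (w¹ᵢ)* ∧ (w²ᵢ)* = Σᵢ (w̃¹ᵢ)* ∧ (w̃²ᵢ)*. Hence the dualizing form ω_D is well defined. -/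
set_option synthInstance.maxHeartbeats 400000
set_option maxHeartbeats 1000000

open ExteriorAlgebra

variable {V : Type*} [NormedAddCommGroup V] [InnerProductSpace ℝ V]

/-- The covector `g(v, ·)` dual to `v` with respect to the inner product (for an
orthonormal basis this is the dual basis covector `v*`). -/
noncomputable def dualCov (v : V) : Module.Dual ℝ V :=
  (innerSL ℝ v).toLinearMap

/-- The family `v₁,...,vₙ,w¹₁,...,w¹ₙ,w²₁,...,w²ₙ` is an orthonormal standard
polysymplectic basis for the pair of 2-forms `ω₁, ω₂ ∈ Λ²V*`: it is an orthonormal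
basis of `V` and `ωⱼ = Σᵢ vᵢ* ∧ (wʲᵢ)*`. -/
def IsOrthoStdPolysymplecticBasis {n : ℕ}
    (ω₁ ω₂ : ExteriorAlgebra ℝ (Module.Dual ℝ V))
    (v w₁ w₂ : Fin n → V) : Prop :=
  Orthonormal ℝ (Sum.elim v (Sum.elim w₁ w₂))
    ∧ Submodule.span ℝ (Set.range (Sum.elim v (Sum.elim w₁ w₂))) = ⊤
    ∧ ω₁ = ∑ i, ι ℝ (dualCov (v i)) * ι ℝ (dualCov (w₁ i))
    ∧ ω₂ = ∑ i, ι ℝ (dualCov (v i)) * ι ℝ (dualCov (w₂ i))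

open RealInnerProductSpace in
theorem dualCov_apply (z u : V) : dualCov z u = ⟪z, u⟫ := rfl

open RealInnerProductSpace

/-- Double contraction: evaluation of a 2-form at `(x, y)`. -/
noncomputable def dEval (x : V) :
    ExteriorAlgebra ℝ (Module.Dual ℝ V) →ₗ[ℝ] ExteriorAlgebra ℝ (Module.Dual ℝ V) :=
  CliffordAlgebra.contractLeft (Module.Dual.eval ℝ V x)

theorem dEval_ι_mul_ι (x y : V) (a b : Module.Dual ℝ V) :
    dEval y (dEval x (ι ℝ a * ι ℝ b))
      = algebraMap ℝ (ExteriorAlgebra ℝ (Module.Dual ℝ V)) (a x * b y - a y * b x) := by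
  have e1 : dEval x (ι ℝ a * ι ℝ b) = a x • ι ℝ b - b x • ι ℝ a := by
    rw [dEval, CliffordAlgebra.contractLeft_ι_mul, CliffordAlgebra.contractLeft_ι,
      Module.Dual.eval_apply, Module.Dual.eval_apply, ← Algebra.commutes, ← Algebra.smul_def]
  rw [e1, map_sub, map_smul, map_smul, dEval, CliffordAlgebra.contractLeft_ι,
    CliffordAlgebra.contractLeft_ι, Module.Dual.eval_apply, Module.Dual.eval_apply,
    Algebra.smul_def, Algebra.smul_def, ← RingHom.map_mul, ← RingHom.map_mul, ← RingHom.map_sub,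
    mul_comm (b x) (a y)]

theorem ι_mul_ι_swap (a b : Module.Dual ℝ V) :
    ι ℝ b * ι ℝ a = -(ι ℝ a * ι ℝ b) :=
  eq_neg_of_add_eq_zero_right (ι_add_mul_swap a b)

theorem dualCov_expand {ι' : Type*} [Fintype ι'] (b : OrthonormalBasis ι' ℝ V) (z : V) :
    dualCov z = ∑ p, ⟪b p, z⟫ • dualCov (b p) := by
  ext u
  have hz := b.sum_repr' z
  calc dualCov z u = ⟪z, u⟫ := rfl
    _ = ⟪∑ p, ⟪b p, z⟫ • b p, u⟫ := by rw [hz]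
    _ = ∑ p, ⟪b p, z⟫ * ⟪b p, u⟫ := by
        rw [sum_inner]; exact Finset.sum_congr rfl fun p _ => real_inner_smul_left _ _ _
    _ = _ := by simp [dualCov_apply]

theorem antisym_sum {ι' : Type*} [Fintype ι'] {A : Type*} [AddCommGroup A] [Module ℝ A]
    (X : ι' → ι' → A) (hX : ∀ p q, X q p = -X p q) (c d : ι' → ℝ) :
    ∑ p, ∑ q, ((1/2 : ℝ) * (c p * d q - c q * d p)) • X p q
      = ∑ p, ∑ q, (c p * d q) • X p q := by
  have split : ∀ p q, ((1/2 : ℝ) * (c p * d q - c q * d p)) • X p q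
      = ((1/2 : ℝ) * (c p * d q)) • X p q - ((1/2 : ℝ) * (c q * d p)) • X p q := by
    intro p q; rw [mul_sub, sub_smul]
  simp only [split, Finset.sum_sub_distrib]
  have swap2 : ∑ p, ∑ q, ((1/2 : ℝ) * (c q * d p)) • X p q
      = -∑ p, ∑ q, ((1/2 : ℝ) * (c p * d q)) • X p q := by
    calc ∑ p, ∑ q, ((1/2 : ℝ) * (c q * d p)) • X p q
        = ∑ p, ∑ q, -(((1/2 : ℝ) * (c q * d p)) • X q p) := by
          refine Finset.sum_congr rfl fun p _ => Finset.sum_congr rfl fun q _ => ?_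
          rw [hX q p, smul_neg]
      _ = -∑ p, ∑ q, ((1/2 : ℝ) * (c q * d p)) • X q p := by
          simp only [Finset.sum_neg_distrib]
      _ = -∑ q, ∑ p, ((1/2 : ℝ) * (c q * d p)) • X q p := by rw [Finset.sum_comm]
      _ = -∑ p, ∑ q, ((1/2 : ℝ) * (c p * d q)) • X p q := rfl
  rw [swap2, sub_neg_eq_add, ← Finset.sum_add_distrib]
  refine Finset.sum_congr rfl fun p _ => ?_
  rw [← Finset.sum_add_distrib]
  refine Finset.sum_congr rfl fun q _ => ?_
  rw [← add_smul]
  ring_nf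

/-- Reconstruction of `ι z* * ι z'*` from the (antisymmetrized) coefficients in a fixed
orthonormal basis. -/
theorem recon {ι' : Type*} [Fintype ι'] (b : OrthonormalBasis ι' ℝ V) (z z' : V) :
    ι ℝ (dualCov z) * ι ℝ (dualCov z')
      = ∑ p, ∑ q, ((1/2 : ℝ) * (⟪b p, z⟫ * ⟪b q, z'⟫ - ⟪b q, z⟫ * ⟪b p, z'⟫))
          • (ι ℝ (dualCov (b p)) * ι ℝ (dualCov (b q))) := by
  have expand : ι ℝ (dualCov z) * ι ℝ (dualCov z')
      = ∑ p, ∑ q, (⟪b p, z⟫ * ⟪b q, z'⟫) • (ι ℝ (dualCov (b p)) * ι ℝ (dualCov (b q))) := by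
    rw [dualCov_expand b z, dualCov_expand b z', map_sum, map_sum, Finset.sum_mul]
    refine Finset.sum_congr rfl fun p _ => ?_
    rw [Finset.mul_sum]
    refine Finset.sum_congr rfl fun q _ => ?_
    rw [map_smul, map_smul, smul_mul_assoc, mul_smul_comm, smul_smul]
  rw [expand]
  exact (antisym_sum (fun p q => ι ℝ (dualCov (b p)) * ι ℝ (dualCov (b q)))
    (fun p q => ι_mul_ι_swap _ _) (fun p => ⟪b p, z⟫) (fun p => ⟪b p, z'⟫)).symm

/-- Key expansion: `Σᵢ ι (w₁ᵢ)* * ι (w₂ᵢ)*` in terms of a fixed orthonormal basis. -/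
theorem key {n : ℕ} {ι' : Type*} [Fintype ι'] (b : OrthonormalBasis ι' ℝ V)
    (w₁ w₂ : Fin n → V) :
    (∑ i, ι ℝ (dualCov (w₁ i)) * ι ℝ (dualCov (w₂ i))
        : ExteriorAlgebra ℝ (Module.Dual ℝ V))
      = ∑ p, ∑ q,
          ((1/2 : ℝ) * ∑ i, (⟪b p, w₁ i⟫ * ⟪b q, w₂ i⟫ - ⟪b q, w₁ i⟫ * ⟪b p, w₂ i⟫))
            • (ι ℝ (dualCov (b p)) * ι ℝ (dualCov (b q))) := by
  calc (∑ i, ι ℝ (dualCov (w₁ i)) * ι ℝ (dualCov (w₂ i))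
        : ExteriorAlgebra ℝ (Module.Dual ℝ V))
      = ∑ i, ∑ p, ∑ q,
          ((1/2 : ℝ) * (⟪b p, w₁ i⟫ * ⟪b q, w₂ i⟫ - ⟪b q, w₁ i⟫ * ⟪b p, w₂ i⟫))
            • (ι ℝ (dualCov (b p)) * ι ℝ (dualCov (b q))) :=
        Finset.sum_congr rfl fun i _ => recon b (w₁ i) (w₂ i)
    _ = ∑ p, ∑ i, ∑ q,
          ((1/2 : ℝ) * (⟪b p, w₁ i⟫ * ⟪b q, w₂ i⟫ - ⟪b q, w₁ i⟫ * ⟪b p, w₂ i⟫))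
            • (ι ℝ (dualCov (b p)) * ι ℝ (dualCov (b q))) := Finset.sum_comm
    _ = ∑ p, ∑ q, ∑ i,
          ((1/2 : ℝ) * (⟪b p, w₁ i⟫ * ⟪b q, w₂ i⟫ - ⟪b q, w₁ i⟫ * ⟪b p, w₂ i⟫))
            • (ι ℝ (dualCov (b p)) * ι ℝ (dualCov (b q))) :=
        Finset.sum_congr rfl fun p _ => Finset.sum_comm
    _ = _ := by
        refine Finset.sum_congr rfl fun p _ => Finset.sum_congr rfl fun q _ => ?_
        rw [Finset.mul_sum, ← Finset.sum_smul]


/-- The skew map associated with the 2-form `Σᵢ cᵢ* ∧ dᵢ*` via the inner product. -/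
noncomputable def skewMap {n : ℕ} (c d : Fin n → V) (x : V) : V :=
  ∑ i, (⟪c i, x⟫ • d i - ⟪d i, x⟫ • c i)

theorem inner_skewMap_right {n : ℕ} (c d : Fin n → V) (u x : V) :
    ⟪u, skewMap c d x⟫ = ∑ i, (⟪c i, x⟫ * ⟪u, d i⟫ - ⟪d i, x⟫ * ⟪u, c i⟫) := by
  rw [skewMap, inner_sum]
  refine Finset.sum_congr rfl fun i _ => ?_
  rw [inner_sub_right, real_inner_smul_right, real_inner_smul_right]

theorem inner_skewMap_left {n : ℕ} (c d : Fin n → V) (x y : V) :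
    ⟪skewMap c d x, y⟫ = ∑ i, (⟪c i, x⟫ * ⟪d i, y⟫ - ⟪c i, y⟫ * ⟪d i, x⟫) := by
  rw [skewMap, sum_inner]
  refine Finset.sum_congr rfl fun i _ => ?_
  rw [inner_sub_left, real_inner_smul_left, real_inner_smul_left]
  ring

/-- For an orthonormal standard polysymplectic basis, the skew map of the dualizing
form is the commutator of the skew maps of `ω₁` and `ω₂`. -/
theorem skew_comm {n : ℕ} (v w₁ w₂ : Fin n → V)
    (hon : Orthonormal ℝ (Sum.elim v (Sum.elim w₁ w₂))) (x : V) :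
    skewMap w₁ w₂ x = skewMap v w₁ (skewMap v w₂ x) - skewMap v w₂ (skewMap v w₁ x) := by
  classical
  have hEE := orthonormal_iff_ite.mp hon
  have hvv : ∀ i j : Fin n, ⟪v i, v j⟫ = if i = j then 1 else 0 := fun i j => by
    simpa using hEE (Sum.inl i) (Sum.inl j)
  have hvw₁ : ∀ i j : Fin n, ⟪v i, w₁ j⟫ = 0 := fun i j => by
    simpa using hEE (Sum.inl i) (Sum.inr (Sum.inl j))
  have hvw₂ : ∀ i j : Fin n, ⟪v i, w₂ j⟫ = 0 := fun i j => by
    simpa using hEE (Sum.inl i) (Sum.inr (Sum.inr j))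
  have hw₁v : ∀ i j : Fin n, ⟪w₁ i, v j⟫ = 0 := fun i j => by
    simpa using hEE (Sum.inr (Sum.inl i)) (Sum.inl j)
  have hw₂v : ∀ i j : Fin n, ⟪w₂ i, v j⟫ = 0 := fun i j => by
    simpa using hEE (Sum.inr (Sum.inr i)) (Sum.inl j)
  have hw₁w₂ : ∀ i j : Fin n, ⟪w₁ i, w₂ j⟫ = 0 := fun i j => by
    simpa using hEE (Sum.inr (Sum.inl i)) (Sum.inr (Sum.inr j))
  have hw₂w₁ : ∀ i j : Fin n, ⟪w₂ i, w₁ j⟫ = 0 := fun i j => by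
    simpa using hEE (Sum.inr (Sum.inr i)) (Sum.inr (Sum.inl j))
  have h1 : ∀ i, ⟪v i, skewMap v w₂ x⟫ = -⟪w₂ i, x⟫ := by
    intro i
    rw [inner_skewMap_right]
    simp [hvw₂, hvv, mul_ite]
  have h2 : ∀ i, ⟪w₁ i, skewMap v w₂ x⟫ = 0 := by
    intro i
    rw [inner_skewMap_right]
    simp [hw₁w₂, hw₁v]
  have h3 : ∀ i, ⟪v i, skewMap v w₁ x⟫ = -⟪w₁ i, x⟫ := by
    intro i
    rw [inner_skewMap_right]
    simp [hvw₁, hvv, mul_ite]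
  have h4 : ∀ i, ⟪w₂ i, skewMap v w₁ x⟫ = 0 := by
    intro i
    rw [inner_skewMap_right]
    simp [hw₂w₁, hw₂v]
  have e1 : skewMap v w₁ (skewMap v w₂ x) = ∑ i, (-⟪w₂ i, x⟫) • w₁ i := by
    rw [skewMap]
    refine Finset.sum_congr rfl fun i _ => ?_
    rw [h1, h2, zero_smul, sub_zero]
  have e2 : skewMap v w₂ (skewMap v w₁ x) = ∑ i, (-⟪w₁ i, x⟫) • w₂ i := by
    rw [skewMap]
    refine Finset.sum_congr rfl fun i _ => ?_
    rw [h3, h4, zero_smul, sub_zero]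
  rw [e1, e2, skewMap, ← Finset.sum_sub_distrib]
  refine Finset.sum_congr rfl fun i _ => ?_
  rw [neg_smul, neg_smul, sub_neg_eq_add]
  abel

/-- the dualizing form `ω_D = Σᵢ (w¹ᵢ)* ∧ (w²ᵢ)*` does not depend on the
choice of orthonormal standard polysymplectic basis, hence is well defined. -/
theorem stmt_0 {n : ℕ} (hdim : Module.finrank ℝ V = 3 * n)
    (ω₁ ω₂ : ExteriorAlgebra ℝ (Module.Dual ℝ V))
    (v w₁ w₂ : Fin n → V) (v' w₁' w₂' : Fin n → V)
    (hb : IsOrthoStdPolysymplecticBasis ω₁ ω₂ v w₁ w₂)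
    (hb' : IsOrthoStdPolysymplecticBasis ω₁ ω₂ v' w₁' w₂') :
    (∑ i, ι ℝ (dualCov (w₁ i)) * ι ℝ (dualCov (w₂ i))
        : ExteriorAlgebra ℝ (Module.Dual ℝ V))
      = ∑ i, ι ℝ (dualCov (w₁' i)) * ι ℝ (dualCov (w₂' i)) := by
  classical
  obtain ⟨hon, hsp, hω₁, hω₂⟩ := hb
  obtain ⟨hon', hsp', hω₁', hω₂'⟩ := hb'
  let b : OrthonormalBasis ((Fin n) ⊕ ((Fin n) ⊕ (Fin n))) ℝ V :=
    OrthonormalBasis.mk hon hsp.ge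
  -- Step 1: the bilinear forms of equal 2-forms agree.
  have hF : ∀ (c d c' d' : Fin n → V),
      (∑ i, ι ℝ (dualCov (c i)) * ι ℝ (dualCov (d i)) : ExteriorAlgebra ℝ (Module.Dual ℝ V))
        = ∑ i, ι ℝ (dualCov (c' i)) * ι ℝ (dualCov (d' i)) →
      ∀ x y : V, ∑ i, (⟪c i, x⟫ * ⟪d i, y⟫ - ⟪c i, y⟫ * ⟪d i, x⟫)
        = ∑ i, (⟪c' i, x⟫ * ⟪d' i, y⟫ - ⟪c' i, y⟫ * ⟪d' i, x⟫) := by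
    intro c d c' d' h x y
    have h2 := congrArg (fun ξ => dEval y (dEval x ξ)) h
    simp only [map_sum, dEval_ι_mul_ι, dualCov_apply] at h2
    rw [← map_sum, ← map_sum] at h2
    exact (ExteriorAlgebra.algebraMap_inj (Module.Dual ℝ V) _ _).mp h2
  -- Step 2: the skew maps of ω₁ and ω₂ are basis independent.
  have hA₁ : ∀ u, skewMap v w₁ u = skewMap v' w₁' u := by
    intro u
    apply ext_inner_right ℝ
    intro t
    rw [inner_skewMap_left, inner_skewMap_left]
    exact hF v w₁ v' w₁' (hω₁.symm.trans hω₁') u t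
  have hA₂ : ∀ u, skewMap v w₂ u = skewMap v' w₂' u := by
    intro u
    apply ext_inner_right ℝ
    intro t
    rw [inner_skewMap_left, inner_skewMap_left]
    exact hF v w₂ v' w₂' (hω₂.symm.trans hω₂') u t
  -- Step 3: the skew map of the dualizing form is basis independent.
  have hD : ∀ x y : V, ⟪skewMap w₁ w₂ x, y⟫ = ⟪skewMap w₁' w₂' x, y⟫ := by
    intro x y
    rw [skew_comm v w₁ w₂ hon x, skew_comm v' w₁' w₂' hon' x,
      hA₂ x, hA₁ (skewMap v' w₂' x), hA₁ x, hA₂ (skewMap v' w₁' x)]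
  have conv1 : ∀ (c d : Fin n → V) (x y : V),
      ∑ i, (⟪x, c i⟫ * ⟪y, d i⟫ - ⟪y, c i⟫ * ⟪x, d i⟫) = ⟪skewMap c d x, y⟫ := by
    intro c d x y
    rw [inner_skewMap_left]
    refine Finset.sum_congr rfl fun i _ => ?_
    rw [real_inner_comm x (c i), real_inner_comm y (d i),
      real_inner_comm y (c i), real_inner_comm x (d i)]
  -- Step 4: reconstruct both sides from their coefficients in the fixed basis b.
  rw [key b w₁ w₂, key b w₁' w₂']
  refine Finset.sum_congr rfl fun p _ => Finset.sum_congr rfl fun q _ => ?_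
  congr 2
  rw [conv1 w₁ w₂ (b p) (b q), conv1 w₁' w₂' (b p) (b q)]
  exact hD (b p) (b q)
end

section
/- With the notation of the dualizing form: if v₁,...,vₙ,w¹₁,...,w¹ₙ,w²₁,...,w²ₙ and ṽ₁,...,ṽₙ,w̃¹₁,...,w̃¹ₙ,w̃²₁,...,w̃²ₙ are two orthonormal standard polysymplectic bases of the same polysymplectic inner product space, then there exists an orthogonal matrix (aᵢⱼ) such that (w̃¹ᵢ)* = Σⱼ aᵢⱼ (w¹ⱼ)* and (w̃²ᵢ)* = Σⱼ aᵢⱼ (w²ⱼ)* simultaneously. -/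
open ExteriorAlgebra

variable {V : Type*} [NormedAddCommGroup V] [InnerProductSpace ℝ V]

open RealInnerProductSpace

@[simp] theorem dualCov_apply_s1 (v x : V) : dualCov v x = ⟪v, x⟫ := rfl

/-- The bilinear evaluation `(φ, ψ) ↦ φ x * ψ y - φ y * ψ x` as a multilinear map. -/
noncomputable def evalMulti (x y : V) :
    MultilinearMap ℝ (fun _ : Fin 2 => Module.Dual ℝ V) ℝ where
  toFun f := f 0 x * f 1 y - f 0 y * f 1 x
  map_update_add' f i a b := by
    fin_cases i <;>
      simp [Function.update_self, Function.update_of_ne, LinearMap.add_apply] <;> ring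
  map_update_smul' f i c a := by
    fin_cases i <;>
      simp [Function.update_self, Function.update_of_ne, LinearMap.smul_apply] <;> ring

set_option linter.unreachableTactic false in
set_option linter.unusedTactic false in
/-- The evaluation `evalMulti` as an alternating map. -/
noncomputable def evalAlt (x y : V) : (Module.Dual ℝ V) [⋀^Fin 2]→ₗ[ℝ] ℝ where
  toMultilinearMap := evalMulti x y
  map_eq_zero_of_eq' f i j hf hij := by
    fin_cases i <;> fin_cases j <;> simp_all [evalMulti] <;> ring_nf <;>
      simp_all [mul_comm]

/-- Evaluation of (the degree-2 part of) an element of the exterior algebra of the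
dual space on a pair of vectors. -/
noncomputable def evalExt (x y : V) : ExteriorAlgebra ℝ (Module.Dual ℝ V) →ₗ[ℝ] ℝ :=
  liftAlternating (fun i => match i with
    | 2 => evalAlt x y
    | _ => 0)

theorem evalExt_ι_mul (x y : V) (φ ψ : Module.Dual ℝ V) :
    evalExt x y (ι ℝ φ * ι ℝ ψ) = φ x * ψ y - φ y * ψ x := by
  rw [evalExt, liftAlternating_ι_mul, liftAlternating_ι]
  rfl

/-- The operator `x ↦ ∑ i, ⟪u i, x⟫ • w i - ⟪w i, x⟫ • u i`. -/
noncomputable def opA {n : ℕ} (u w : Fin n → V) : V →ₗ[ℝ] V :=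
  ∑ i, ((innerSL ℝ (u i)).toLinearMap.smulRight (w i)
      - (innerSL ℝ (w i)).toLinearMap.smulRight (u i))

theorem opA_apply {n : ℕ} (u w : Fin n → V) (x : V) :
    opA u w x = ∑ i, (⟪u i, x⟫ • w i - ⟪w i, x⟫ • u i) := by simp [opA]

theorem inner_opA {n : ℕ} (u w : Fin n → V) (x y : V) :
    ⟪opA u w x, y⟫ = evalExt x y (∑ i, ι ℝ (dualCov (u i)) * ι ℝ (dualCov (w i))) := by
  rw [opA_apply, sum_inner, map_sum]
  refine Finset.sum_congr rfl fun i _ => ?_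
  rw [evalExt_ι_mul, inner_sub_left, real_inner_smul_left, real_inner_smul_left]
  simp only [dualCov_apply_s1]
  ring

theorem opA_eq {n : ℕ} (u w u' w' : Fin n → V)
    (h : (∑ i, ι ℝ (dualCov (u i)) * ι ℝ (dualCov (w i)))
        = ∑ i, ι ℝ (dualCov (u' i)) * ι ℝ (dualCov (w' i))) :
    opA u w = opA u' w' := by
  ext x
  refine ext_inner_right ℝ fun y => ?_
  rw [inner_opA, inner_opA, h]

/-- any two orthonormal standard polysymplectic bases are related, on
the `w¹` and `w²` parts of the dual bases, by a single orthogonal matrix `(aᵢⱼ)`: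
`(w̃¹ᵢ)* = Σⱼ aᵢⱼ (w¹ⱼ)*` and `(w̃²ᵢ)* = Σⱼ aᵢⱼ (w²ⱼ)*` simultaneously. -/
theorem stmt_1 {n : ℕ} (hdim : Module.finrank ℝ V = 3 * n)
    (ω₁ ω₂ : ExteriorAlgebra ℝ (Module.Dual ℝ V))
    (v w₁ w₂ : Fin n → V) (v' w₁' w₂' : Fin n → V)
    (hb : IsOrthoStdPolysymplecticBasis ω₁ ω₂ v w₁ w₂)
    (hb' : IsOrthoStdPolysymplecticBasis ω₁ ω₂ v' w₁' w₂') :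
    ∃ a : Matrix (Fin n) (Fin n) ℝ,
      a ∈ Matrix.orthogonalGroup (Fin n) ℝ
        ∧ (∀ i, dualCov (w₁' i) = ∑ j, a i j • dualCov (w₁ j))
        ∧ (∀ i, dualCov (w₂' i) = ∑ j, a i j • dualCov (w₂ j)) := by
  clear hdim
  obtain ⟨ho, hsp, hω1, hω2⟩ := hb
  obtain ⟨ho', hsp', hω1', hω2'⟩ := hb'
  have key := orthonormal_iff_ite.mp ho
  have key' := orthonormal_iff_ite.mp ho'
  have hvv : ∀ i j : Fin n, ⟪v i, v j⟫ = if i = j then 1 else 0 := fun i j => by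
    simpa using key (Sum.inl i) (Sum.inl j)
  have hvw1 : ∀ i j : Fin n, ⟪v i, w₁ j⟫ = 0 := fun i j => by
    simpa using key (Sum.inl i) (Sum.inr (Sum.inl j))
  have hvw2 : ∀ i j : Fin n, ⟪v i, w₂ j⟫ = 0 := fun i j => by
    simpa using key (Sum.inl i) (Sum.inr (Sum.inr j))
  have hw1v : ∀ i j : Fin n, ⟪w₁ i, v j⟫ = 0 := fun i j => by
    simpa using key (Sum.inr (Sum.inl i)) (Sum.inl j)
  have hw2v : ∀ i j : Fin n, ⟪w₂ i, v j⟫ = 0 := fun i j => by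
    simpa using key (Sum.inr (Sum.inr i)) (Sum.inl j)
  have hw1w1 : ∀ i j : Fin n, ⟪w₁ i, w₁ j⟫ = if i = j then 1 else 0 := fun i j => by
    simpa using key (Sum.inr (Sum.inl i)) (Sum.inr (Sum.inl j))
  have hw2w2 : ∀ i j : Fin n, ⟪w₂ i, w₂ j⟫ = if i = j then 1 else 0 := fun i j => by
    simpa using key (Sum.inr (Sum.inr i)) (Sum.inr (Sum.inr j))
  have hw1w2 : ∀ i j : Fin n, ⟪w₁ i, w₂ j⟫ = 0 := fun i j => by
    simpa using key (Sum.inr (Sum.inl i)) (Sum.inr (Sum.inr j))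
  have hw2w1 : ∀ i j : Fin n, ⟪w₂ i, w₁ j⟫ = 0 := fun i j => by
    simpa using key (Sum.inr (Sum.inr i)) (Sum.inr (Sum.inl j))
  have hvv' : ∀ i j : Fin n, ⟪v' i, v' j⟫ = if i = j then 1 else 0 := fun i j => by
    simpa using key' (Sum.inl i) (Sum.inl j)
  have hvw1' : ∀ i j : Fin n, ⟪v' i, w₁' j⟫ = 0 := fun i j => by
    simpa using key' (Sum.inl i) (Sum.inr (Sum.inl j))
  have hvw2' : ∀ i j : Fin n, ⟪v' i, w₂' j⟫ = 0 := fun i j => by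
    simpa using key' (Sum.inl i) (Sum.inr (Sum.inr j))
  have hw2v' : ∀ i j : Fin n, ⟪w₂' i, v' j⟫ = 0 := fun i j => by
    simpa using key' (Sum.inr (Sum.inr i)) (Sum.inl j)
  have hw1w1' : ∀ i j : Fin n, ⟪w₁' i, w₁' j⟫ = if i = j then 1 else 0 := fun i j => by
    simpa using key' (Sum.inr (Sum.inl i)) (Sum.inr (Sum.inl j))
  have hw2w1' : ∀ i j : Fin n, ⟪w₂' i, w₁' j⟫ = 0 := fun i j => by
    simpa using key' (Sum.inr (Sum.inr i)) (Sum.inr (Sum.inl j))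
  -- the intrinsic operators determined by `ω₁`, `ω₂` and the inner product
  have hA1 : opA v w₁ = opA v' w₁' := opA_eq _ _ _ _ (hω1.symm.trans hω1')
  have hA2 : opA v w₂ = opA v' w₂' := opA_eq _ _ _ _ (hω2.symm.trans hω2')
  -- computations on basis vectors
  have hA1w1 : ∀ j, opA v w₁ (w₁ j) = -(v j) := fun j => by
    rw [opA_apply]
    simp [hvw1, hw1w1, ite_smul, Finset.sum_ite_eq, Finset.sum_sub_distrib]
  have hA2v : ∀ j, opA v w₂ (v j) = w₂ j := fun j => by
    rw [opA_apply]
    simp [hvv, hw2v, ite_smul, Finset.sum_ite_eq, Finset.sum_sub_distrib]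
  have hA1w1' : ∀ j, opA v' w₁' (w₁' j) = -(v' j) := fun j => by
    rw [opA_apply]
    simp [hvw1', hw1w1', ite_smul, Finset.sum_ite_eq, Finset.sum_sub_distrib]
  have hA2v' : ∀ j, opA v' w₂' (v' j) = w₂' j := fun j => by
    rw [opA_apply]
    simp [hvv', hw2v', ite_smul, Finset.sum_ite_eq, Finset.sum_sub_distrib]
  have hA2w1' : ∀ j, opA v w₂ (w₁' j) = 0 := fun j => by
    rw [hA2, opA_apply]
    simp [hvw1', hw2w1']
  -- perpendicularity of the `w₁'` to the `v`'s and `w₂`'s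
  have hperpv : ∀ i j, ⟪v j, w₁' i⟫ = 0 := fun i j => by
    have h0 : ⟪opA v w₂ (w₁' i), w₂ j⟫ = ⟪v j, w₁' i⟫ := by
      rw [opA_apply, sum_inner]
      simp [inner_sub_left, real_inner_smul_left, hw2w2, hvw2, mul_ite,
        Finset.sum_ite_eq, Finset.sum_sub_distrib]
    rw [hA2w1' i] at h0
    simpa using h0.symm
  have hperpw2 : ∀ i j, ⟪w₂ j, w₁' i⟫ = 0 := fun i j => by
    have h0 : ⟪opA v w₂ (w₁' i), v j⟫ = -⟪w₂ j, w₁' i⟫ := by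
      rw [opA_apply, sum_inner]
      simp [inner_sub_left, real_inner_smul_left, hvv, hw2v, mul_ite,
        Finset.sum_ite_eq, Finset.sum_sub_distrib]
    rw [hA2w1' i] at h0
    simpa using h0.symm
  -- the orthonormal basis and the matrix `a`
  set a : Matrix (Fin n) (Fin n) ℝ := fun i j => ⟪w₁ j, w₁' i⟫ with ha
  let b : OrthonormalBasis (Fin n ⊕ (Fin n ⊕ Fin n)) ℝ V := OrthonormalBasis.mk ho hsp.ge
  have hrepr : ∀ i, w₁' i = ∑ j, a i j • w₁ j := fun i => by
    have h := b.sum_repr' (w₁' i)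
    rw [Fintype.sum_sum_type, Fintype.sum_sum_type] at h
    simp only [b, OrthonormalBasis.coe_mk, Sum.elim_inl, Sum.elim_inr,
      hperpv i, hperpw2 i, zero_smul, Finset.sum_const_zero, zero_add, add_zero] at h
    exact h.symm
  -- `w₂'` representation via the intrinsic operator `T = opA v w₂ ∘ opA v w₁`
  have hw2repr : ∀ i, w₂' i = ∑ j, a i j • w₂ j := fun i => by
    have hT : opA v w₂ (opA v w₁ (w₁' i)) = -(w₂' i) := by
      rw [hA1, hA2, hA1w1', map_neg, hA2v']
    rw [hrepr i, map_sum, map_sum] at hT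
    simp only [map_smul, hA1w1, map_neg, hA2v, smul_neg, ← Finset.sum_neg_distrib] at hT
    rw [← neg_eq_iff_eq_neg] at hT
    simpa using hT.symm
  refine ⟨a, ?_, fun i => ?_, fun i => ?_⟩
  · rw [Matrix.mem_orthogonalGroup_iff]
    ext i k
    have hd : ⟪w₁' i, w₁' k⟫ = ∑ j, a i j * a k j := by
      rw [hrepr i, sum_inner]
      simp [real_inner_smul_left, ha]
    rw [hw1w1' i k] at hd
    simp [Matrix.mul_apply, Matrix.one_apply, ← hd]
  · apply LinearMap.ext fun x => ?_
    rw [dualCov_apply_s1, hrepr i, sum_inner]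
    simp [real_inner_smul_left]
  · apply LinearMap.ext fun x => ?_
    rw [dualCov_apply_s1, hw2repr i, sum_inner]
    simp [real_inner_smul_left]
end

section
/- Let X be a Riemannian manifold with 2-forms ω₁, ω₂ admitting at each point an orthonormal standard polysymplectic coframe (an almost 2-Kähler manifold), and let ∇ be the Levi-Civita connection. If ∇ω₁ = 0 and ∇ω₂ = 0, then the dualizing form ω_D is also parallel, ∇ω_D = 0; in particular dω_D = 0, so the manifold is weakly self-dual. -/
/-- Partial derivative in the `k`-th coordinate direction. -/
noncomputable def pd {d : ℕ} (f : (Fin d → ℝ) → ℝ) (x : Fin d → ℝ) (k : Fin d) : ℝ :=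
  fderiv ℝ f x (Pi.single k 1)

/-- Christoffel symbols `Γˡᵢⱼ` of the Levi-Civita connection of the metric `g`, in
coordinates. -/
noncomputable def christoffel {d : ℕ} (g : (Fin d → ℝ) → Matrix (Fin d) (Fin d) ℝ)
    (p : Fin d → ℝ) (l i j : Fin d) : ℝ :=
  (1 / 2) * ∑ m, (g p)⁻¹ l m *
    (pd (fun q => g q m j) p i + pd (fun q => g q m i) p j - pd (fun q => g q i j) p m)

/-- Components `(∇ₖ ω)ᵢⱼ` of the Levi-Civita covariant derivative of a 2-form `ω`. -/
noncomputable def covDer {d : ℕ} (g ω : (Fin d → ℝ) → Matrix (Fin d) (Fin d) ℝ)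
    (p : Fin d → ℝ) (k i j : Fin d) : ℝ :=
  pd (fun q => ω q i j) p k - (∑ l, christoffel g p l k i * ω p l j)
    - ∑ l, christoffel g p l k j * ω p i l

/-- `(X, ω₁, ω₂, g)` is almost 2-Kähler at `p`, with dualizing form `ω_D`: there is a
coframe `C` (indexed by `(0,r) ↔ dxᵣ`, `(1,r) ↔ dy¹ᵣ`, `(2,r) ↔ dy²ᵣ`) which is
orthonormal (`g = Σₐ Cₐ ⊗ Cₐ`) and standard polysymplectic
(`ωⱼ = Σᵣ dxᵣ ∧ dyʲᵣ`), and `ω_D = Σᵣ dy¹ᵣ ∧ dy²ᵣ`. -/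
def IsAlmost2KahlerAt (n : ℕ)
    (g ω₁ ω₂ ωD : (Fin (3 * n) → ℝ) → Matrix (Fin (3 * n)) (Fin (3 * n)) ℝ)
    (p : Fin (3 * n) → ℝ) : Prop :=
  ∃ C : Fin 3 × Fin n → (Fin (3 * n) → ℝ),
    (∀ i j, g p i j = ∑ a, C a i * C a j)
      ∧ (∀ i j, ω₁ p i j = ∑ r, (C (0, r) i * C (1, r) j - C (0, r) j * C (1, r) i))
      ∧ (∀ i j, ω₂ p i j = ∑ r, (C (0, r) i * C (2, r) j - C (0, r) j * C (2, r) i))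
      ∧ (∀ i j, ωD p i j = ∑ r, (C (1, r) i * C (2, r) j - C (1, r) j * C (2, r) i))

set_option linter.unnecessarySimpa false
set_option linter.unnecessarySeqFocus false

section aux
variable {d : ℕ} {p : Fin d → ℝ} {k : Fin d}

lemma aux_pd_congr {f h : (Fin d → ℝ) → ℝ} {U : Set (Fin d → ℝ)} (hU : IsOpen U)
    (hp : p ∈ U) (heq : ∀ q ∈ U, f q = h q) : pd f p k = pd h p k := by
  unfold pd
  rw [Filter.EventuallyEq.fderiv_eq (Filter.eventuallyEq_of_mem (hU.mem_nhds hp) heq)]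

lemma aux_pd_const (c : ℝ) : pd (fun _ => c) p k = 0 := by
  simp [pd]

lemma aux_pd_sum {ι : Type*} (s : Finset ι) (f : ι → (Fin d → ℝ) → ℝ)
    (h : ∀ i ∈ s, DifferentiableAt ℝ (f i) p) :
    pd (fun q => ∑ i ∈ s, f i q) p k = ∑ i ∈ s, pd (f i) p k := by
  unfold pd
  rw [fderiv_fun_sum h]
  simp

lemma aux_pd_mul {f h : (Fin d → ℝ) → ℝ} (hf : DifferentiableAt ℝ f p)
    (hh : DifferentiableAt ℝ h p) :
    pd (fun q => f q * h q) p k = f p * pd h p k + h p * pd f p k := by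
  unfold pd
  rw [fderiv_fun_mul hf hh]
  simp

lemma aux_pd_sub {f h : (Fin d → ℝ) → ℝ} (hf : DifferentiableAt ℝ f p)
    (hh : DifferentiableAt ℝ h p) :
    pd (fun q => f q - h q) p k = pd f p k - pd h p k := by
  unfold pd
  rw [fderiv_fun_sub hf hh]
  simp

lemma aux_diffAt_prod {ι : Type*} (s : Finset ι) (f : ι → (Fin d → ℝ) → ℝ)
    (h : ∀ i ∈ s, DifferentiableAt ℝ (f i) p) :
    DifferentiableAt ℝ (fun q => ∏ i ∈ s, f i q) p := by
  classical
  induction s using Finset.induction_on with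
  | empty => simpa using differentiableAt_const (1 : ℝ)
  | insert _ _ hnot ih =>
    rename_i a s
    simp only [Finset.prod_insert hnot]
    exact (h a (Finset.mem_insert_self a s)).mul
      (ih fun i hi => h i (Finset.mem_insert_of_mem hi))

variable {m : Type*} [Fintype m] [DecidableEq m]

lemma aux_diffAt_det {M : (Fin d → ℝ) → Matrix m m ℝ}
    (h : ∀ i j, DifferentiableAt ℝ (fun q => M q i j) p) :
    DifferentiableAt ℝ (fun q => (M q).det) p := by
  simp only [Matrix.det_apply]
  apply DifferentiableAt.fun_sum
  intro σ _
  simp only [Units.smul_def, zsmul_eq_mul]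
  exact (differentiableAt_const _).mul (aux_diffAt_prod _ _ fun i _ => h (σ i) i)

lemma aux_diffAt_adjugate {M : (Fin d → ℝ) → Matrix m m ℝ}
    (h : ∀ i j, DifferentiableAt ℝ (fun q => M q i j) p) (a b : m) :
    DifferentiableAt ℝ (fun q => (M q).adjugate a b) p := by
  simp only [Matrix.adjugate_apply]
  apply aux_diffAt_det
  intro i j
  by_cases hib : i = b
  · simpa [Matrix.updateRow_apply, hib] using differentiableAt_const _
  · simpa [Matrix.updateRow_apply, hib] using h i j

lemma aux_diffAt_inv {M : (Fin d → ℝ) → Matrix m m ℝ}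
    (h : ∀ i j, DifferentiableAt ℝ (fun q => M q i j) p)
    (hdet : (M p).det ≠ 0) (a b : m) :
    DifferentiableAt ℝ (fun q => (M q)⁻¹ a b) p := by
  have : ∀ q, (M q)⁻¹ a b = ((M q).det)⁻¹ * (M q).adjugate a b := by
    intro q
    rw [Matrix.inv_def, Matrix.smul_apply, Ring.inverse_eq_inv', smul_eq_mul]
  simp only [this]
  exact ((aux_diffAt_det h).inv hdet).mul (aux_diffAt_adjugate h a b)

end aux


lemma aux_contract {d : ℕ} (A B : Matrix (Fin d) (Fin d) ℝ) (hAB : A * B = 1)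
    (S : Fin d → ℝ) (c : ℝ) (i : Fin d) :
    ∑ l, A i l * (c * ∑ m, B l m * S m) = c * S i := by
  have h1 : ∑ l, A i l * (c * ∑ m, B l m * S m)
      = ∑ m, (∑ l, A i l * B l m) * (c * S m) := by
    simp only [Finset.mul_sum]
    rw [Finset.sum_comm]
    exact Finset.sum_congr rfl fun m _ => by
      rw [Finset.sum_mul]
      exact Finset.sum_congr rfl fun l _ => by ring
  rw [h1]
  have h2 : ∀ m, (∑ l, A i l * B l m) = (1 : Matrix (Fin d) (Fin d) ℝ) i m := fun m => by
    rw [← hAB, Matrix.mul_apply]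
  simp only [h2, Matrix.one_apply, ite_mul, one_mul, zero_mul]
  rw [Finset.sum_ite_eq]
  simp

open Matrix
section mat
variable {d : ℕ}

/-- matrix of partial derivatives of the entries -/
noncomputable def Dmat (X : (Fin d → ℝ) → Matrix (Fin d) (Fin d) ℝ)
    (p : Fin d → ℝ) (k : Fin d) : Matrix (Fin d) (Fin d) ℝ :=
  Matrix.of fun i j => pd (fun q => X q i j) p k

/-- Christoffel matrix `Γ l i = Γˡ_{k i}` -/
noncomputable def Gam (g : (Fin d → ℝ) → Matrix (Fin d) (Fin d) ℝ)
    (p : Fin d → ℝ) (k : Fin d) : Matrix (Fin d) (Fin d) ℝ :=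
  Matrix.of fun l i => christoffel g p l k i

variable {g X Y : (Fin d → ℝ) → Matrix (Fin d) (Fin d) ℝ} {p : Fin d → ℝ} {k : Fin d}

lemma aux_covDer_eq (i j : Fin d) :
    covDer g X p k i j
      = (Dmat X p k - (Gam g p k)ᵀ * X p - X p * Gam g p k) i j := by
  simp only [covDer, Matrix.sub_apply, Matrix.mul_apply, Dmat, Gam, Matrix.transpose_apply,
    Matrix.of_apply]
  congr 1
  exact Finset.sum_congr rfl fun l _ => mul_comm _ _

lemma aux_Dmat_mul
    (hX : ∀ i j, DifferentiableAt ℝ (fun q => X q i j) p)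
    (hY : ∀ i j, DifferentiableAt ℝ (fun q => Y q i j) p) :
    Dmat (fun q => X q * Y q) p k = Dmat X p k * Y p + X p * Dmat Y p k := by
  ext i j
  simp only [Dmat, Matrix.of_apply, Matrix.add_apply, Matrix.mul_apply]
  rw [aux_pd_sum _ (fun a q => X q i a * Y q a j) fun a _ => (hX i a).mul (hY a j)]
  rw [← Finset.sum_add_distrib]
  exact Finset.sum_congr rfl fun a _ => by
    rw [aux_pd_mul (hX i a) (hY a j)]; ring

lemma aux_Dmat_sub
    (hX : ∀ i j, DifferentiableAt ℝ (fun q => X q i j) p)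
    (hY : ∀ i j, DifferentiableAt ℝ (fun q => Y q i j) p) :
    Dmat (fun q => X q - Y q) p k = Dmat X p k - Dmat Y p k := by
  ext i j
  simp only [Dmat, Matrix.of_apply, Matrix.sub_apply]
  exact aux_pd_sub (hX i j) (hY i j)

lemma aux_Dmat_congr {U : Set (Fin d → ℝ)} (hU : IsOpen U) (hp : p ∈ U)
    (heq : ∀ q ∈ U, X q = Y q) : Dmat X p k = Dmat Y p k := by
  ext i j
  exact aux_pd_congr hU hp fun q hq => by rw [heq q hq]

lemma aux_Dmat_one : Dmat (fun _ => (1 : Matrix (Fin d) (Fin d) ℝ)) p k = 0 := by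
  ext i j
  exact aux_pd_const ((1 : Matrix (Fin d) (Fin d) ℝ) i j)

lemma aux_diffAt_matmul
    (hX : ∀ i j, DifferentiableAt ℝ (fun q => X q i j) p)
    (hY : ∀ i j, DifferentiableAt ℝ (fun q => Y q i j) p) (i j : Fin d) :
    DifferentiableAt ℝ (fun q => (X q * Y q) i j) p := by
  rw [show (fun q => (X q * Y q) i j) = fun q => ∑ a, X q i a * Y q a j from
    funext fun q => Matrix.mul_apply]
  exact DifferentiableAt.fun_sum fun a _ => (hX i a).mul (hY a j)

end mat

namespace keyalg
variable {n : ℕ}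

/-- elementary "block" matrix -/
noncomputable def E (n : ℕ) (s t : Fin 3) : Matrix (Fin 3 × Fin n) (Fin 3 × Fin n) ℝ :=
  Matrix.of fun a b =>
    (if a.1 = s then (1:ℝ) else 0) * (if b.1 = t then 1 else 0) * (if a.2 = b.2 then 1 else 0)

lemma E_mul (s t u v : Fin 3) :
    E n s t * E n u v = if t = u then E n s v else 0 := by
  ext a b
  simp only [Matrix.mul_apply, E, Matrix.of_apply, Fintype.sum_prod_type]
  by_cases htu : t = u <;>
    simp [htu, Finset.sum_ite_eq, Finset.sum_ite_eq', ite_mul, mul_ite, mul_comm, mul_assoc,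
      Finset.mul_sum] <;>
    by_cases h1 : a.1 = s <;> by_cases h2 : b.1 = v <;> by_cases h3 : a.2 = b.2 <;>
    simp [h1, h2, h3, htu] <;> exact fun h => htu h.symm

end keyalg

namespace keyalg

lemma rep (C : Fin 3 × Fin n → Fin (3*n) → ℝ) (s t : Fin 3) (i j : Fin (3*n)) :
    ((Matrix.of fun (a : Fin 3 × Fin n) i => C a i)ᵀ * (E n s t - E n t s)
        * (Matrix.of fun (a : Fin 3 × Fin n) i => C a i)) i j
      = ∑ r, (C (s, r) i * C (t, r) j - C (t, r) i * C (s, r) j) := by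
  simp only [Matrix.mul_apply, Matrix.sub_apply, E, Matrix.of_apply, Matrix.transpose_apply,
    Fintype.sum_prod_type, ite_mul, mul_ite, one_mul, zero_mul, mul_one, mul_zero,
    Finset.sum_ite_eq, Finset.sum_ite_eq', Finset.mem_univ, if_true, sub_mul, mul_sub,
    Finset.sum_sub_distrib, Finset.sum_ite_irrel, Finset.sum_const_zero]

lemma sandwich (M : Matrix (Fin 3 × Fin n) (Fin (3*n)) ℝ)
    (hdet : (Mᵀ * M).det ≠ 0) : M * (Mᵀ * M)⁻¹ * Mᵀ = 1 := by
  let e : Fin (3*n) ≃ Fin 3 × Fin n := finProdFinEquiv.symm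
  let N : Matrix (Fin (3*n)) (Fin (3*n)) ℝ := M.submatrix e id
  have hMN : M = N.submatrix e.symm id := by
    ext a i; simp [N, Matrix.submatrix_apply]
  have hNtN : Nᵀ * N = Mᵀ * M := by
    have h1 : Nᵀ = Mᵀ.submatrix id ⇑e := rfl
    have h2 : N = M.submatrix ⇑e id := rfl
    rw [h1, h2, Matrix.submatrix_mul_equiv Mᵀ M id e id]
    rfl
  have hdN : IsUnit N.det := by
    have h0 : N.det * N.det ≠ 0 := by
      have h1 := hdet
      rw [← hNtN, Matrix.det_mul, Matrix.det_transpose] at h1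
      exact h1
    exact isUnit_iff_ne_zero.2 fun h => h0 (by rw [h, mul_zero])
  have hdNt : IsUnit Nᵀ.det := by rwa [Matrix.det_transpose]
  have hinner : N * (Nᵀ * N)⁻¹ * Nᵀ = 1 := by
    rw [Matrix.mul_inv_rev]
    calc N * (N⁻¹ * Nᵀ⁻¹) * Nᵀ = (N * N⁻¹) * (Nᵀ⁻¹ * Nᵀ) := by noncomm_ring
    _ = 1 := by rw [Matrix.mul_nonsing_inv _ hdN, Matrix.nonsing_inv_mul _ hdNt, one_mul]
  have hMt : Mᵀ = Nᵀ.submatrix id ⇑e.symm := by rw [hMN]; rfl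
  rw [← hNtN, hMt, hMN]
  have s1 : N.submatrix ⇑e.symm id * (Nᵀ * N)⁻¹ = (N * (Nᵀ * N)⁻¹).submatrix ⇑e.symm id := by
    simpa using Matrix.submatrix_mul_equiv N ((Nᵀ * N)⁻¹) (⇑e.symm)
      (Equiv.refl (Fin (3*n))) id
  rw [s1]
  have s2 : (N * (Nᵀ * N)⁻¹).submatrix ⇑e.symm id * Nᵀ.submatrix id ⇑e.symm
      = (N * (Nᵀ * N)⁻¹ * Nᵀ).submatrix ⇑e.symm ⇑e.symm := by
    simpa using Matrix.submatrix_mul_equiv (N * (Nᵀ * N)⁻¹) Nᵀ (⇑e.symm)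
      (Equiv.refl (Fin (3*n))) (⇑e.symm)
  rw [s2, hinner, Matrix.submatrix_one_equiv]

end keyalg

open keyalg in
lemma aux_key {n : ℕ} {g ω₁ ω₂ ωD : (Fin (3*n) → ℝ) → Matrix (Fin (3*n)) (Fin (3*n)) ℝ}
    {p : Fin (3*n) → ℝ} (hpos : (g p).PosDef)
    (h : IsAlmost2KahlerAt n g ω₁ ω₂ ωD p) :
    ωD p = ω₂ p * (g p)⁻¹ * ω₁ p - ω₁ p * (g p)⁻¹ * ω₂ p := by
  obtain ⟨C, hC0, hC1, hC2, hCD⟩ := h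
  set M : Matrix (Fin 3 × Fin n) (Fin (3*n)) ℝ := Matrix.of fun a i => C a i with hM
  have hg : g p = Mᵀ * M := by
    ext i j; rw [hC0]; simp [M, Matrix.mul_apply]
  have hω₁ : ω₁ p = Mᵀ * (E n 0 1 - E n 1 0) * M := by
    ext i j; rw [hC1, rep]; exact Finset.sum_congr rfl fun r _ => by ring
  have hω₂ : ω₂ p = Mᵀ * (E n 0 2 - E n 2 0) * M := by
    ext i j; rw [hC2, rep]; exact Finset.sum_congr rfl fun r _ => by ring
  have hωD : ωD p = Mᵀ * (E n 1 2 - E n 2 1) * M := by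
    ext i j; rw [hCD, rep]; exact Finset.sum_congr rfl fun r _ => by ring
  have hs : M * (g p)⁻¹ * Mᵀ = 1 := by
    rw [hg]; exact sandwich M (by rw [← hg]; exact hpos.det_pos.ne')
  have e1 : (E n 0 2 - E n 2 0) * (E n 0 1 - E n 1 0) = -(E n 2 1) := by
    rw [sub_mul, mul_sub, mul_sub, E_mul, E_mul, E_mul, E_mul,
      if_neg (by decide : ¬(2:Fin 3) = 0), if_neg (by decide : ¬(2:Fin 3) = 1),
      if_pos (rfl : (0:Fin 3) = 0), if_neg (by decide : ¬(0:Fin 3) = 1)]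
    simp
  have e2 : (E n 0 1 - E n 1 0) * (E n 0 2 - E n 2 0) = -(E n 1 2) := by
    rw [sub_mul, mul_sub, mul_sub, E_mul, E_mul, E_mul, E_mul,
      if_neg (by decide : ¬(1:Fin 3) = 0), if_neg (by decide : ¬(1:Fin 3) = 2),
      if_pos (rfl : (0:Fin 3) = 0), if_neg (by decide : ¬(0:Fin 3) = 2)]
    simp
  have h2 : ω₂ p * (g p)⁻¹ * ω₁ p = Mᵀ * (-(E n 2 1)) * M := by
    rw [hω₂, hω₁, ← e1]
    calc Mᵀ * (E n 0 2 - E n 2 0) * M * (g p)⁻¹ * (Mᵀ * (E n 0 1 - E n 1 0) * M)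
        = Mᵀ * (E n 0 2 - E n 2 0) * (M * (g p)⁻¹ * Mᵀ) * (E n 0 1 - E n 1 0) * M := by
          simp only [Matrix.mul_assoc]
      _ = Mᵀ * ((E n 0 2 - E n 2 0) * (E n 0 1 - E n 1 0)) * M := by
          rw [hs, Matrix.mul_one]; simp only [Matrix.mul_assoc]
  have h1 : ω₁ p * (g p)⁻¹ * ω₂ p = Mᵀ * (-(E n 1 2)) * M := by
    rw [hω₁, hω₂, ← e2]
    calc Mᵀ * (E n 0 1 - E n 1 0) * M * (g p)⁻¹ * (Mᵀ * (E n 0 2 - E n 2 0) * M)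
        = Mᵀ * (E n 0 1 - E n 1 0) * (M * (g p)⁻¹ * Mᵀ) * (E n 0 2 - E n 2 0) * M := by
          simp only [Matrix.mul_assoc]
      _ = Mᵀ * ((E n 0 1 - E n 1 0) * (E n 0 2 - E n 2 0)) * M := by
          rw [hs, Matrix.mul_one]; simp only [Matrix.mul_assoc]
  rw [h1, h2, hωD]
  simp only [Matrix.mul_sub, Matrix.sub_mul, Matrix.mul_neg, Matrix.neg_mul, sub_neg_eq_add]
  abel


open Matrix in
/-- in local coordinates: on an almost 2-Kähler manifold, if the
Levi-Civita covariant derivatives of `ω₁` and `ω₂` vanish, then the dualizing form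
`ω_D` is parallel, `∇ω_D = 0`; in particular `dω_D = 0`, so the manifold is weakly
self-dual. -/
theorem stmt_3 {n : ℕ} (U : Set (Fin (3 * n) → ℝ)) (hU : IsOpen U)
    (g ω₁ ω₂ ωD : (Fin (3 * n) → ℝ) → Matrix (Fin (3 * n)) (Fin (3 * n)) ℝ)
    (hg : ∀ i j, ContDiffOn ℝ (⊤ : ℕ∞) (fun p => g p i j) U)
    (hgsymm : ∀ p ∈ U, (g p).IsSymm) (hgpos : ∀ p ∈ U, (g p).PosDef)
    (hω₁ : ∀ i j, ContDiffOn ℝ (⊤ : ℕ∞) (fun p => ω₁ p i j) U)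
    (hω₂ : ∀ i j, ContDiffOn ℝ (⊤ : ℕ∞) (fun p => ω₂ p i j) U)
    (hωD : ∀ i j, ContDiffOn ℝ (⊤ : ℕ∞) (fun p => ωD p i j) U)
    (h2K : ∀ p ∈ U, IsAlmost2KahlerAt n g ω₁ ω₂ ωD p)
    (hpar₁ : ∀ p ∈ U, ∀ k i j, covDer g ω₁ p k i j = 0)
    (hpar₂ : ∀ p ∈ U, ∀ k i j, covDer g ω₂ p k i j = 0) :
    (∀ p ∈ U, ∀ k i j, covDer g ωD p k i j = 0)
      ∧ (∀ p ∈ U, ∀ i j k,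
          pd (fun q => ωD q i j) p k + pd (fun q => ωD q j k) p i
            + pd (fun q => ωD q k i) p j = 0) := by
  have hanti : ∀ p ∈ U, ∀ i j, ωD p i j = -ωD p j i := by
    intro p hp i j
    obtain ⟨C, -, -, -, hCD⟩ := h2K p hp
    rw [hCD i j, hCD j i, ← Finset.sum_neg_distrib]
    exact Finset.sum_congr rfl fun r _ => by ring
  have hmain : ∀ p ∈ U, ∀ k i j, covDer g ωD p k i j = 0 := by
    intro p hp k
    have hdet : (g p).det ≠ 0 := (hgpos p hp).det_pos.ne'
    have hdetU : ∀ q ∈ U, (g q).det ≠ 0 := fun q hq => (hgpos q hq).det_pos.ne'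
    have dg : ∀ i j, DifferentiableAt ℝ (fun q => g q i j) p := fun i j =>
      ((hg i j).contDiffAt (hU.mem_nhds hp)).differentiableAt (by simp)
    have dω₁ : ∀ i j, DifferentiableAt ℝ (fun q => ω₁ q i j) p := fun i j =>
      ((hω₁ i j).contDiffAt (hU.mem_nhds hp)).differentiableAt (by simp)
    have dω₂ : ∀ i j, DifferentiableAt ℝ (fun q => ω₂ q i j) p := fun i j =>
      ((hω₂ i j).contDiffAt (hU.mem_nhds hp)).differentiableAt (by simp)
    have dB : ∀ a b, DifferentiableAt ℝ (fun q => (g q)⁻¹ a b) p := fun a b =>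
      aux_diffAt_inv dg hdet a b
    have hB1 : (g p)⁻¹ * g p = 1 := Matrix.nonsing_inv_mul _ (isUnit_iff_ne_zero.2 hdet)
    have hB2 : g p * (g p)⁻¹ = 1 := Matrix.mul_nonsing_inv _ (isUnit_iff_ne_zero.2 hdet)
    have hsympd : ∀ a b c, pd (fun q => g q a b) p c = pd (fun q => g q b a) p c :=
      fun a b c => aux_pd_congr hU hp fun q hq => (hgsymm q hq).apply b a
    have hdg_mat : Dmat g p k = (Gam g p k)ᵀ * g p + g p * Gam g p k := by
      ext i j
      have e2 : (g p * Gam g p k) i j = (1/2) * (pd (fun q => g q i j) p k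
          + pd (fun q => g q i k) p j - pd (fun q => g q k j) p i) := by
        simp only [Matrix.mul_apply, Gam, Matrix.of_apply, christoffel]
        exact aux_contract (g p) ((g p)⁻¹) hB2 _ _ i
      have e1 : ((Gam g p k)ᵀ * g p) i j = (1/2) * (pd (fun q => g q j i) p k
          + pd (fun q => g q j k) p i - pd (fun q => g q k i) p j) := by
        have h3 : ((Gam g p k)ᵀ * g p) i j = ∑ l, g p j l * christoffel g p l k i := by
          simp only [Matrix.mul_apply, Matrix.transpose_apply, Gam, Matrix.of_apply]
          exact Finset.sum_congr rfl fun l _ => by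
            rw [(hgsymm p hp).apply j l]; ring
        rw [h3]
        simp only [christoffel]
        exact aux_contract (g p) ((g p)⁻¹) hB2 _ _ j
      simp only [Matrix.add_apply, Dmat, Matrix.of_apply, e1, e2]
      rw [hsympd j i k, hsympd j k i, hsympd k i j]
      ring
    have hDB : Dmat (fun q => (g q)⁻¹) p k
        = -((g p)⁻¹ * (Gam g p k)ᵀ) - Gam g p k * (g p)⁻¹ := by
      have key : Dmat (fun q => (g q)⁻¹) p k * g p + (g p)⁻¹ * Dmat g p k = 0 := by
        rw [← aux_Dmat_mul dB dg]
        rw [aux_Dmat_congr hU hp (fun q hq =>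
          Matrix.nonsing_inv_mul _ (isUnit_iff_ne_zero.2 (hdetU q hq)))]
        exact aux_Dmat_one
      have key2 : Dmat (fun q => (g q)⁻¹) p k * g p = -((g p)⁻¹ * Dmat g p k) :=
        eq_neg_of_add_eq_zero_left key
      calc Dmat (fun q => (g q)⁻¹) p k
          = Dmat (fun q => (g q)⁻¹) p k * (g p * (g p)⁻¹) := by rw [hB2, Matrix.mul_one]
        _ = Dmat (fun q => (g q)⁻¹) p k * g p * (g p)⁻¹ := by rw [Matrix.mul_assoc]
        _ = -((g p)⁻¹ * Dmat g p k) * (g p)⁻¹ := by rw [key2]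
        _ = -((g p)⁻¹ * (Gam g p k)ᵀ) - Gam g p k * (g p)⁻¹ := by
            rw [hdg_mat]
            have t1 : (g p)⁻¹ * ((Gam g p k)ᵀ * g p + g p * Gam g p k) * (g p)⁻¹
                = (g p)⁻¹ * (Gam g p k)ᵀ * (g p * (g p)⁻¹)
                  + ((g p)⁻¹ * g p) * (Gam g p k * (g p)⁻¹) := by
              simp only [Matrix.mul_add, Matrix.add_mul, Matrix.mul_assoc]
            rw [Matrix.neg_mul, t1, hB1, hB2, Matrix.mul_one, Matrix.one_mul, neg_add,
              sub_eq_add_neg]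
    have hD1 : Dmat ω₁ p k = (Gam g p k)ᵀ * ω₁ p + ω₁ p * Gam g p k := by
      ext i j
      have h0 := hpar₁ p hp k i j
      rw [aux_covDer_eq] at h0
      simp only [Matrix.sub_apply, Matrix.add_apply] at h0 ⊢
      linarith
    have hD2 : Dmat ω₂ p k = (Gam g p k)ᵀ * ω₂ p + ω₂ p * Gam g p k := by
      ext i j
      have h0 := hpar₂ p hp k i j
      rw [aux_covDer_eq] at h0
      simp only [Matrix.sub_apply, Matrix.add_apply] at h0 ⊢
      linarith
    have hkeyU : ∀ q ∈ U, ωD q = ω₂ q * (g q)⁻¹ * ω₁ q - ω₁ q * (g q)⁻¹ * ω₂ q :=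
      fun q hq => aux_key (hgpos q hq) (h2K q hq)
    have hkeyp : ωD p = ω₂ p * (g p)⁻¹ * ω₁ p - ω₁ p * (g p)⁻¹ * ω₂ p := hkeyU p hp
    have hDωD : Dmat ωD p k
        = (Dmat ω₂ p k * (g p)⁻¹ + ω₂ p * Dmat (fun q => (g q)⁻¹) p k) * ω₁ p
            + ω₂ p * (g p)⁻¹ * Dmat ω₁ p k
          - ((Dmat ω₁ p k * (g p)⁻¹ + ω₁ p * Dmat (fun q => (g q)⁻¹) p k) * ω₂ p
            + ω₁ p * (g p)⁻¹ * Dmat ω₂ p k) := by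
      rw [aux_Dmat_congr hU hp hkeyU]
      rw [aux_Dmat_sub
        (aux_diffAt_matmul (aux_diffAt_matmul dω₂ dB) dω₁)
        (aux_diffAt_matmul (aux_diffAt_matmul dω₁ dB) dω₂)]
      rw [aux_Dmat_mul (aux_diffAt_matmul dω₂ dB) dω₁,
          aux_Dmat_mul (aux_diffAt_matmul dω₁ dB) dω₂,
          aux_Dmat_mul dω₂ dB, aux_Dmat_mul dω₁ dB]
    intro i j
    rw [aux_covDer_eq]
    have hzero : Dmat ωD p k - (Gam g p k)ᵀ * ωD p - ωD p * Gam g p k = 0 := by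
      rw [hDωD, hD1, hD2, hDB, hkeyp]
      simp only [Matrix.mul_add, Matrix.add_mul, Matrix.mul_sub, Matrix.sub_mul,
        Matrix.mul_neg, Matrix.neg_mul, Matrix.mul_assoc, sub_eq_add_neg, neg_add,
        neg_neg]
      abel
    rw [hzero]
    simp
  refine ⟨hmain, ?_⟩
  intro p hp i j k
  have hsympd : ∀ a b c, pd (fun q => g q a b) p c = pd (fun q => g q b a) p c :=
    fun a b c => aux_pd_congr hU hp fun q hq => (hgsymm q hq).apply b a
  have hGsym : ∀ l a b, christoffel g p l a b = christoffel g p l b a := by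
    intro l a b
    unfold christoffel
    congr 1
    refine Finset.sum_congr rfl fun m _ => ?_
    rw [hsympd a b m]
    ring
  have hc : ∀ k i j, pd (fun q => ωD q i j) p k
      = (∑ l, christoffel g p l k i * ωD p l j)
        + ∑ l, christoffel g p l k j * ωD p i l := by
    intro k i j
    have h0 := hmain p hp k i j
    unfold covDer at h0
    linarith
  rw [hc k i j, hc i j k, hc j k i]
  have comb :
      ((∑ l, christoffel g p l k i * ωD p l j) + ∑ l, christoffel g p l k j * ωD p i l)
        + ((∑ l, christoffel g p l i j * ωD p l k) + ∑ l, christoffel g p l i k * ωD p j l)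
        + ((∑ l, christoffel g p l j k * ωD p l i) + ∑ l, christoffel g p l j i * ωD p k l)
      = ∑ l, (christoffel g p l k i * ωD p l j + christoffel g p l k j * ωD p i l
          + christoffel g p l i j * ωD p l k + christoffel g p l i k * ωD p j l
          + christoffel g p l j k * ωD p l i + christoffel g p l j i * ωD p k l) := by
    simp only [Finset.sum_add_distrib]
    ring
  rw [comb]
  refine Finset.sum_eq_zero fun l _ => ?_
  rw [hGsym l i k, hGsym l j k, hGsym l j i,
      hanti p hp i l, hanti p hp j l, hanti p hp k l]
  ring
end
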